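/- arXiv:2007.09442 — 2 statements merged into one kernel-verified Lean document; each statement's English description precedes it below -/
import Mathlib

section
/- Let A be a C*-algebra, (X, Σ) a measurable space, and m a state-valued vector measure on (X, Σ): m maps measurable sets to continuous linear functionals on A, m(∅) = 0, m is countably additive in the dual norm, and for every measurable S and every a ∈ A with 0 ≤ a the value (m S)(a) is a nonnegative real number. Then the set function S ↦ ‖m(S)‖ (dual norm) is countably additive: ‖m(∅)‖ = 0 and for every sequence (Sₙ) of pairwise disjoint measurable sets the series Σₙ ‖m(Sₙ)‖ converges with sum ‖m(⋃ₙ Sₙ)‖; consequently there exists a finite measure m̂ on (X, Σ) with m̂(S) = ‖m(S)‖ for every measurable S. Moreover m is absolutely continuous with respect to m̂: if ‖m(S)‖ = 0 then m(S) = 0. -/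
/-!
For a positive functional `φ` on a unital C⋆-algebra, `φ (star x) = conj (φ x)` and the
Cauchy–Schwarz inequality `|φ x|² ≤ φ 1 · φ (star x * x) ≤ φ 1 · ‖φ‖ · ‖x‖²` give
`‖φ‖ = φ 1`. So on the cone of positive functionals the dual norm coincides with the
continuous real-linear map `φ ↦ Re (φ 1)`, and countable additivity of `m` in norm
passes to `S ↦ ‖m S‖`, which is then a finite measure.
-/

open scoped Function

open ComplexConjugate MeasureTheory

section Algebraic

variable {A : Type*} [Ring A] [StarRing A] [Algebra ℂ A] [StarModule ℂ A]

lemma star_one_add_smul_mul_one_add_smul (t : ℂ) (x : A) :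
    star (1 + t • x) * (1 + t • x) =
      1 + t • x + conj t • star x + (conj t * t) • (star x * x) := by
  rw [star_add, star_one, star_smul, Complex.star_def, add_mul, one_mul, mul_add, mul_one,
    smul_mul_assoc, mul_smul_comm, smul_smul]
  abel

lemma LinearMap.apply_star_one_add_smul_mul_one_add_smul (φ : A →ₗ[ℂ] ℂ) (t : ℂ) (x : A) :
    φ (star (1 + t • x) * (1 + t • x)) =
      φ 1 + t * φ x + conj t * φ (star x) + conj t * t * φ (star x * x) := by
  simp only [star_one_add_smul_mul_one_add_smul, map_add, map_smul, smul_eq_mul]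

variable [PartialOrder A] [StarOrderedRing A] {φ : A →ₗ[ℂ] ℂ}

lemma LinearMap.map_star_of_nonneg (hφ : ∀ a : A, 0 ≤ a → ∃ r : ℝ, 0 ≤ r ∧ φ a = r)
    (x : A) : φ (star x) = conj (φ x) := by
  have im_eq_zero {a : A} (ha : 0 ≤ a) : (φ a).im = 0 := by
    obtain ⟨r, -, hr⟩ := hφ a ha
    simp [hr]
  -- `t = 1` and `t = I` read off `Im (φ x + φ x⋆) = 0` and `Re (φ x - φ x⋆) = 0`.
  have h1 := im_eq_zero (star_mul_self_nonneg (1 + (1 : ℂ) • x))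
  have hI := im_eq_zero (star_mul_self_nonneg (1 + Complex.I • x))
  rw [φ.apply_star_one_add_smul_mul_one_add_smul] at h1 hI
  have h0 := im_eq_zero (zero_le_one' A)
  have hx := im_eq_zero (star_mul_self_nonneg x)
  simp only [map_one, one_mul, Complex.conj_I, Complex.add_im, Complex.mul_im, Complex.I_re,
    Complex.I_im, Complex.neg_im, Complex.neg_re, Complex.mul_re, h0, hx] at h1 hI
  apply Complex.ext <;> simp only [Complex.conj_re, Complex.conj_im] <;> linarith

/-- Cauchy–Schwarz inequality for the positive sesquilinear form `(x, y) ↦ φ (star y * x)`,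
with `y = 1`. -/
lemma LinearMap.normSq_apply_le_of_nonneg
    (hφ : ∀ a : A, 0 ≤ a → ∃ r : ℝ, 0 ≤ r ∧ φ a = r) (x : A) :
    Complex.normSq (φ x) ≤ (φ 1).re * (φ (star x * x)).re := by
  obtain ⟨p, hp0, hp⟩ := hφ 1 zero_le_one
  obtain ⟨q, hq0, hq⟩ := hφ _ (star_mul_self_nonneg x)
  set N := Complex.normSq (φ x)
  -- positivity at `t = -s · conj (φ x)`, a real quadratic in `s`
  have quadratic (s : ℝ) : 0 ≤ q * N * (s * s) + -2 * N * s + p := by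
    obtain ⟨r, hr0, hr⟩ := hφ _ (star_mul_self_nonneg (1 + (-s * conj (φ x)) • x))
    rw [φ.apply_star_one_add_smul_mul_one_add_smul, φ.map_star_of_nonneg hφ, hp, hq] at hr
    have := congrArg Complex.re hr
    simp only [N, Complex.normSq_apply, neg_mul, map_neg, map_mul, Complex.conj_ofReal,
      Complex.conj_conj, mul_neg, neg_neg, Complex.add_re, Complex.ofReal_re, Complex.neg_re,
      Complex.mul_re, Complex.conj_re, Complex.ofReal_im, Complex.conj_im, Complex.mul_im,
      zero_mul, mul_zero, neg_zero, sub_zero, add_zero] at this ⊢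
    nlinarith
  have hdiscrim := discrim_le_zero quadratic
  rw [discrim] at hdiscrim
  rw [hp, hq, Complex.ofReal_re, Complex.ofReal_re]
  rcases (Complex.normSq_nonneg (φ x)).eq_or_lt with hN | hN
  · nlinarith [mul_nonneg hp0 hq0]
  · nlinarith

end Algebraic

section Normed

variable {A : Type*} [NormedRing A] [StarRing A] [CStarRing A] [NormedAlgebra ℂ A]
  [StarModule ℂ A] [PartialOrder A] [StarOrderedRing A]

lemma StrongDual.norm_eq_re_apply_one_of_nonneg (φ : StrongDual ℂ A)
    (hφ : ∀ a : A, 0 ≤ a → ∃ r : ℝ, 0 ≤ r ∧ φ a = r) : ‖φ‖ = (φ 1).re := by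
  set p := (φ 1).re
  have hp : 0 ≤ p := by
    obtain ⟨r, hr0, hr⟩ := hφ 1 zero_le_one
    simpa [p, hr]
  have hsq (x : A) : ‖φ x‖ ^ 2 ≤ p * ‖φ‖ * ‖x‖ ^ 2 :=
    calc ‖φ x‖ ^ 2 = Complex.normSq (φ x) := (Complex.normSq_eq_norm_sq _).symm
      _ ≤ p * (φ (star x * x)).re := (φ : A →ₗ[ℂ] ℂ).normSq_apply_le_of_nonneg hφ x
      _ ≤ p * (‖φ‖ * ‖x‖ ^ 2) := by
        gcongr
        calc (φ (star x * x)).re ≤ ‖φ (star x * x)‖ := Complex.re_le_norm _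
          _ ≤ ‖φ‖ * ‖star x * x‖ := φ.le_opNorm _
          _ = ‖φ‖ * ‖x‖ ^ 2 := by rw [CStarRing.norm_star_mul_self, sq]
      _ = p * ‖φ‖ * ‖x‖ ^ 2 := by ring
  have hle : ‖φ‖ ≤ √(p * ‖φ‖) := by
    refine φ.opNorm_le_bound (Real.sqrt_nonneg _) fun x => ?_
    rw [← Real.sqrt_sq (norm_nonneg x), ← Real.sqrt_mul (by positivity)]
    exact Real.le_sqrt_of_sq_le (hsq x)
  have hge : p ≤ ‖φ‖ := by
    nontriviality A using p, Subsingleton.eq_zero (1 : A)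
    calc p ≤ ‖φ 1‖ := Complex.re_le_norm _
      _ ≤ ‖φ‖ * ‖(1 : A)‖ := φ.le_opNorm 1
      _ = ‖φ‖ := by rw [norm_one, mul_one]
  have := (Real.le_sqrt (norm_nonneg φ) (by positivity)).mp hle
  nlinarith [norm_nonneg φ]

lemma StrongDual.hasSum_norm_of_nonneg {ι : Type*} {f : ι → StrongDual ℂ A}
    {φ : StrongDual ℂ A} (hf : HasSum f φ)
    (hf_nonneg : ∀ i, ∀ a : A, 0 ≤ a → ∃ r : ℝ, 0 ≤ r ∧ f i a = r)
    (hφ : ∀ a : A, 0 ≤ a → ∃ r : ℝ, 0 ≤ r ∧ φ a = r) :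
    HasSum (fun i => ‖f i‖) ‖φ‖ := by
  simp only [norm_eq_re_apply_one_of_nonneg _ (hf_nonneg _), norm_eq_re_apply_one_of_nonneg _ hφ]
  exact Complex.reCLM.hasSum ((ContinuousLinearMap.apply ℂ ℂ (1 : A)).hasSum hf)

end Normed

lemma MeasureTheory.exists_isFiniteMeasure_eq_ofReal {X : Type*} [MeasurableSpace X]
    (μ : Set X → ℝ) (hμ_empty : μ ∅ = 0) (hμ_nonneg : ∀ S, MeasurableSet S → 0 ≤ μ S)
    (hμ_add : ∀ S : ℕ → Set X, (∀ n, MeasurableSet (S n)) → Pairwise (Disjoint on S) →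
      HasSum (fun n => μ (S n)) (μ (⋃ n, S n))) :
    ∃ ν : Measure X, IsFiniteMeasure ν ∧ ∀ S, MeasurableSet S → ν S = ENNReal.ofReal (μ S) := by
  refine ⟨.ofMeasurable (fun S _ => ENNReal.ofReal (μ S)) (by simp [hμ_empty]) ?_,
    ⟨?_⟩, fun S hS => Measure.ofMeasurable_apply S hS⟩
  · intro S hS hdisj
    rw [← (hμ_add S hS hdisj).tsum_eq,
      ENNReal.ofReal_tsum_of_nonneg (fun n => hμ_nonneg _ (hS n)) (hμ_add S hS hdisj).summable]
  · rw [Measure.ofMeasurable_apply _ MeasurableSet.univ]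
    exact ENNReal.ofReal_lt_top

/-- The norm measure of an algebraic state-valued measure: `S ↦ ‖m(S)‖` is countably
additive, defines a finite measure `m̂`, and `m` is absolutely continuous w.r.t. `m̂`. -/
theorem stateValuedMeasure_norm_measure
    {A : Type*} [NormedRing A] [StarRing A] [CStarRing A]
    [NormedAlgebra ℂ A] [StarModule ℂ A] [PartialOrder A] [StarOrderedRing A]
    {X : Type*} [MeasurableSpace X]
    (m : Set X → StrongDual ℂ A)
    (hempty : m ∅ = 0)
    (hadd : ∀ S : ℕ → Set X, (∀ n, MeasurableSet (S n)) → Pairwise (Disjoint on S) →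
      HasSum (fun n => m (S n)) (m (⋃ n, S n)))
    (hpos : ∀ S : Set X, MeasurableSet S → ∀ a : A, 0 ≤ a →
      ∃ r : ℝ, 0 ≤ r ∧ m S a = (r : ℂ)) :
    ‖m ∅‖ = 0 ∧
    (∀ S : ℕ → Set X, (∀ n, MeasurableSet (S n)) → Pairwise (Disjoint on S) →
      HasSum (fun n => ‖m (S n)‖) ‖m (⋃ n, S n)‖) ∧
    (∃ mhat : MeasureTheory.Measure X, MeasureTheory.IsFiniteMeasure mhat ∧
      ∀ S : Set X, MeasurableSet S → mhat S = ENNReal.ofReal ‖m S‖) ∧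
    (∀ S : Set X, MeasurableSet S → ‖m S‖ = 0 → m S = 0) := by
  have hnorm_empty : ‖m ∅‖ = 0 := by rw [hempty, norm_zero]
  have hnorm_add (S : ℕ → Set X) (hS : ∀ n, MeasurableSet (S n))
      (hdisj : Pairwise (Disjoint on S)) : HasSum (fun n => ‖m (S n)‖) ‖m (⋃ n, S n)‖ :=
    StrongDual.hasSum_norm_of_nonneg (hadd S hS hdisj) (fun n => hpos _ (hS n))
      (hpos _ (.iUnion hS))
  exact ⟨hnorm_empty, hnorm_add, exists_isFiniteMeasure_eq_ofReal _ hnorm_empty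
    (fun _ _ => norm_nonneg _) hnorm_add, fun _ _ => norm_eq_zero.mp⟩
end

section
/- Let A be a C*-algebra and (X, Σ) a measurable space. Let m be a map from measurable sets to continuous linear functionals on A such that: m(∅) = 0; m is finitely additive (m(S ∪ T) = m(S) + m(T) for disjoint measurable S, T); every m(S) is a positive functional (i.e., (m S)(a) is real and nonnegative for every a ∈ A with 0 ≤ a); and m is weak-* countably additive, i.e., for every a ∈ A and every sequence (Sₙ) of pairwise disjoint measurable sets, Σₙ (m Sₙ)(a) converges to (m(⋃ₙ Sₙ))(a). Then m is countably additive in norm: for every sequence (Sₙ) of pairwise disjoint measurable sets, Σₙ m(Sₙ) converges unconditionally in the dual norm of A' to m(⋃ₙ Sₙ). -/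
open scoped Function ComplexOrder
open Set Finset MeasureTheory

/-!
A positive functional `φ` on a unital C⋆-algebra satisfies `‖φ‖ ≤ φ 1`: Cauchy–Schwarz for the
semi-inner product `φ (star x * y)` gives `|φ a|² ≤ φ 1 · φ (star a * a) ≤ φ 1 · ‖φ‖ · ‖a‖²`.
Finite additivity and positivity make `S ↦ (m S 1).re` monotone, so the partial sums of
`∑ ‖m (S n)‖` are bounded by `(m (⋃ n, S n) 1).re`. The series `∑ m (S n)` therefore converges
absolutely in the Banach space `A'`, and weak-⋆ σ-additivity identifies its sum.
-/

section PositiveFunctional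

variable {A F : Type*} [Ring A] [StarRing A] [Algebra ℂ A] [StarModule ℂ A] [PartialOrder A]
  [StarOrderedRing A] [FunLike F A ℂ] [LinearMapClass F ℂ A ℂ]

lemma map_star_of_map_nonneg {φ : F} (hφ : ∀ a, 0 ≤ a → 0 ≤ φ a) (y : A) :
    φ (star y) = star (φ y) := by
  have hq (z : A) : IsSelfAdjoint (φ (star z * z)) :=
    (hφ _ (star_mul_self_nonneg z)).isSelfAdjoint
  have hre : IsSelfAdjoint (φ y + φ (star y)) := by
    convert ((hq (1 + y)).sub (hq 1)).sub (hq y) using 1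
    simp only [star_add, star_one, add_mul, mul_add, one_mul, mul_one, map_add]
    ring
  have him : IsSelfAdjoint (Complex.I * (φ y - φ (star y))) := by
    convert ((hq (1 + Complex.I • y)).sub (hq 1)).sub (hq y) using 1
    simp only [star_add, star_one, star_smul, add_mul, mul_add, one_mul, mul_one, map_add,
      smul_mul_assoc, mul_smul_comm, map_smul, smul_eq_mul, Complex.star_def, Complex.conj_I]
    linear_combination φ (star y * y) * Complex.I_sq
  rw [IsSelfAdjoint, star_add, Complex.star_def] at hre
  rw [IsSelfAdjoint, star_mul, star_sub, Complex.star_def, Complex.conj_I] at him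
  rw [Complex.star_def]
  linear_combination (-1 / 2 : ℂ) * hre + (-1 / 2 * Complex.I) * him
    + (-1 / 2 : ℂ) * (starRingEnd ℂ (φ y) - starRingEnd ℂ (φ (star y)) + φ y - φ (star y))
      * Complex.I_sq

abbrev preInnerProductCoreOfMapNonneg (φ : F) (hφ : ∀ a, 0 ≤ a → 0 ≤ φ a) :
    PreInnerProductSpace.Core ℂ A where
  inner x y := φ (star x * y)
  conj_inner_symm x y := by
    rw [← Complex.star_def, ← map_star_of_map_nonneg hφ, star_mul, star_star]
  re_inner_nonneg x := (RCLike.nonneg_iff.mp (hφ _ (star_mul_self_nonneg x))).1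
  add_left x y z := by rw [star_add, add_mul, map_add]
  smul_left x y r := by rw [star_smul, smul_mul_assoc, map_smul, smul_eq_mul]; rfl

lemma norm_sq_map_le_of_map_nonneg {φ : F} (hφ : ∀ a, 0 ≤ a → 0 ≤ φ a) (y : A) :
    ‖φ y‖ ^ 2 ≤ (φ 1).re * (φ (star y * y)).re := by
  have h := InnerProductSpace.Core.inner_mul_inner_self_le
    (c := preInnerProductCoreOfMapNonneg φ hφ) 1 y
  change ‖φ (star 1 * y)‖ * ‖φ (star y * 1)‖ ≤ (φ (star 1 * 1)).re * (φ (star y * y)).re at h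
  rwa [star_one, one_mul, mul_one, mul_one, map_star_of_map_nonneg hφ, norm_star, ← sq] at h

end PositiveFunctional

lemma StrongDual.norm_le_re_apply_one_of_map_nonneg {A : Type*} [NormedRing A] [StarRing A]
    [CStarRing A] [NormedAlgebra ℂ A] [StarModule ℂ A] [PartialOrder A] [StarOrderedRing A]
    (φ : StrongDual ℂ A) (hφ : ∀ a, 0 ≤ a → 0 ≤ φ a) : ‖φ‖ ≤ (φ 1).re := by
  set r := (φ 1).re
  have hr : 0 ≤ r := (RCLike.nonneg_iff.mp (hφ 1 zero_le_one)).1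
  have hsq (a : A) : ‖φ a‖ ^ 2 ≤ (√(r * ‖φ‖) * ‖a‖) ^ 2 := calc
    ‖φ a‖ ^ 2 ≤ r * (φ (star a * a)).re := norm_sq_map_le_of_map_nonneg hφ a
    _ ≤ r * (‖φ‖ * ‖star a * a‖) := by
      gcongr
      exact (Complex.re_le_norm _).trans (φ.le_opNorm _)
    _ = (√(r * ‖φ‖) * ‖a‖) ^ 2 := by
      rw [CStarRing.norm_star_mul_self, mul_pow, Real.sq_sqrt (by positivity)]
      ring
  have hle : ‖φ‖ ≤ √(r * ‖φ‖) := φ.opNorm_le_bound (Real.sqrt_nonneg _) fun a =>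
    (pow_le_pow_iff_left₀ (norm_nonneg _) (by positivity) two_ne_zero).mp (hsq a)
  have hle_sq : ‖φ‖ ^ 2 ≤ r * ‖φ‖ := (Real.le_sqrt (norm_nonneg _) (by positivity)).mp hle
  nlinarith [norm_nonneg φ]

namespace MeasureTheory

theorem isSetRing_measurableSet {X : Type*} [MeasurableSpace X] :
    IsSetRing {s : Set X | MeasurableSet s} :=
  ⟨.empty, fun _ _ => .union, fun _ _ => .diff⟩

variable {α E : Type*} [SeminormedAddCommGroup E] {C : Set (Set α)}

lemma map_addContent_mono_of_norm_le (hC : IsSetRing C) (m : AddContent E C) (f : E →+ ℝ)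
    (hf : ∀ s ∈ C, ‖m s‖ ≤ f (m s)) {s t : Set α} (hs : s ∈ C) (ht : t ∈ C) (hst : s ⊆ t) :
    f (m s) ≤ f (m t) := by
  have hts : t \ s ∈ C := hC.sdiff_mem ht hs
  rw [← union_sdiff_cancel hst, addContent_union hC hs hts disjoint_sdiff_right, map_add]
  exact le_add_of_nonneg_right ((norm_nonneg _).trans (hf _ hts))

lemma summable_norm_addContent_of_norm_le (hC : IsSetRing C) (m : AddContent E C) (f : E →+ ℝ)
    (hf : ∀ s ∈ C, ‖m s‖ ≤ f (m s)) {S : ℕ → Set α} (hS : ∀ n, S n ∈ C) (hU : ⋃ n, S n ∈ C)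
    (hdisj : Pairwise (Disjoint on S)) : Summable fun n => ‖m (S n)‖ := by
  refine summable_of_sum_range_le (c := f (m (⋃ n, S n))) (fun _ => norm_nonneg _) fun N => ?_
  calc ∑ n ∈ range N, ‖m (S n)‖ ≤ ∑ n ∈ range N, f (m (S n)) :=
        sum_le_sum fun n _ => hf _ (hS n)
    _ = f (m (⋃ n ∈ range N, S n)) := by
      rw [addContent_biUnion_eq hC (fun n _ => hS n) (hdisj.set_pairwise _), map_sum]
    _ ≤ f (m (⋃ n, S n)) :=
      map_addContent_mono_of_norm_le hC m f hf (hC.biUnion_mem _ fun n _ => hS n) hU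
        (iUnion₂_subset_iUnion _ _)

end MeasureTheory

theorem ContinuousLinearMap.hasSum_of_summable_of_hasSum_apply {ι 𝕜 E F : Type*}
    [NontriviallyNormedField 𝕜] [SeminormedAddCommGroup E] [NormedSpace 𝕜 E]
    [NormedAddCommGroup F] [NormedSpace 𝕜 F] {f : ι → E →L[𝕜] F} {g : E →L[𝕜] F}
    (hf : Summable f) (h : ∀ x, HasSum (fun i => f i x) (g x)) : HasSum f g := by
  obtain ⟨g', hg'⟩ := hf
  convert hg'
  ext x
  exact (h x).unique (hg'.mapL (ContinuousLinearMap.apply 𝕜 F x))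

/-- Equivalence of the two definitions of a state-valued measure: a positive,
finitely additive, weak-* countably additive dual-valued set function is countably
additive in the dual norm (unconditional convergence = `HasSum`). -/
theorem weakStar_sigmaAdditive_implies_norm_sigmaAdditive
    {A : Type*} [NormedRing A] [StarRing A] [CStarRing A]
    [NormedAlgebra ℂ A] [StarModule ℂ A] [PartialOrder A] [StarOrderedRing A]
    {X : Type*} [MeasurableSpace X]
    (m : Set X → StrongDual ℂ A)
    (hempty : m ∅ = 0)
    (haddfin : ∀ S T : Set X, MeasurableSet S → MeasurableSet T → Disjoint S T →
      m (S ∪ T) = m S + m T)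
    (hpos : ∀ S : Set X, MeasurableSet S → ∀ a : A, 0 ≤ a →
      ∃ r : ℝ, 0 ≤ r ∧ m S a = (r : ℂ))
    (hweak : ∀ (a : A) (S : ℕ → Set X), (∀ n, MeasurableSet (S n)) →
      Pairwise (Disjoint on S) → HasSum (fun n => m (S n) a) (m (⋃ n, S n) a)) :
    ∀ S : ℕ → Set X, (∀ n, MeasurableSet (S n)) → Pairwise (Disjoint on S) →
      HasSum (fun n => m (S n)) (m (⋃ n, S n)) := by
  intro S hS hdisj
  let μ : AddContent (StrongDual ℂ A) {s | MeasurableSet s} :=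
    isSetRing_measurableSet.addContent_of_union m hempty (haddfin _ _)
  let reApplyOne : StrongDual ℂ A →+ ℝ :=
    Complex.reAddGroupHom.comp (ContinuousLinearMap.apply ℂ ℂ (1 : A) : StrongDual ℂ A →+ ℂ)
  have hnorm : ∀ s ∈ {s : Set X | MeasurableSet s}, ‖μ s‖ ≤ reApplyOne (μ s) := by
    refine fun s hs => StrongDual.norm_le_re_apply_one_of_map_nonneg (m s) fun a ha => ?_
    obtain ⟨r, hr, hmr⟩ := hpos s hs a ha
    exact hmr ▸ Complex.zero_le_real.mpr hr
  have hsum : Summable fun n => ‖m (S n)‖ :=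
    summable_norm_addContent_of_norm_le isSetRing_measurableSet μ reApplyOne hnorm hS
      (.iUnion hS) hdisj
  exact ContinuousLinearMap.hasSum_of_summable_of_hasSum_apply hsum.of_norm fun a =>
    hweak a S hS hdisj
end
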